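/- arXiv:2303.12863 — 4 statements merged into one kernel-verified Lean document; each statement's English description precedes it below -/
import Mathlib

section
/- Suppose a tuple of nonnegative Borel measures (μ_h, μ₀, μ_p, μ̄₀, μ̄₁, ν) on compact sets satisfies: (i) μ₀ is a probability measure, (ii) π^t_# μ_h = λ_{[-τ,0]}, (iii) the Liouville equation μ_p = δ₀⊗μ₀ + π^{t,x₀}_# 𝓛_f^† (μ̄₀+μ̄₁), and (iv) the consistency constraint π^{t,x₁}_#(μ̄₀+μ̄₁) + ν = S^τ_#(μ_h + π^{t,x₀}_# μ̄₀). Then all six measures have finite total mass, and in fact: μ_h has mass τ, μ₀ and μ_p have mass 1, μ̄₀+μ̄₁ has mass at most T, μ̄₁ has mass at most τ, and ν has mass at most τ. -/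
open MeasureTheory Set

theorem mv_solution_mass_bounds {n : ℕ}
    (τ T : ℝ) (hτ : 0 < τ) (hT : τ < T)
    (X : Set (Fin n → ℝ)) (hX : IsCompact X)
    (X₀ : Set (Fin n → ℝ)) (hX₀ : X₀ ⊆ X)
    (H₀ : Set (ℝ × (Fin n → ℝ))) (hH₀ : H₀ ⊆ Set.Icc (-τ) (0:ℝ) ×ˢ X)
    (f : ℝ × (Fin n → ℝ) × (Fin n → ℝ) → (Fin n → ℝ)) (hf : Continuous f)
    (μh : Measure (ℝ × (Fin n → ℝ))) (μ₀ : Measure (Fin n → ℝ))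
    (μp ν : Measure (ℝ × (Fin n → ℝ)))
    (μbar₀ μbar₁ : Measure (ℝ × (Fin n → ℝ) × (Fin n → ℝ)))
    [IsFiniteMeasure μh] [IsFiniteMeasure μ₀] [IsFiniteMeasure μp]
    [IsFiniteMeasure ν] [IsFiniteMeasure μbar₀] [IsFiniteMeasure μbar₁]
    (hμhsupp : μh H₀ᶜ = 0)
    (hμ₀supp : μ₀ X₀ᶜ = 0)
    (hμpsupp : μp ((Set.Icc (0:ℝ) T ×ˢ X)ᶜ) = 0)
    (hνsupp : ν ((Set.Icc (0:ℝ) T ×ˢ X)ᶜ) = 0)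
    (hμbar₀supp : μbar₀ ((Set.Icc (0:ℝ) (T - τ) ×ˢ (X ×ˢ X))ᶜ) = 0)
    (hμbar₁supp : μbar₁ ((Set.Icc (T - τ) T ×ˢ (X ×ˢ X))ᶜ) = 0)
    (hprob : μ₀ Set.univ = 1)
    (hmarg : Measure.map Prod.fst μh = volume.restrict (Set.Icc (-τ) (0:ℝ)))
    (hliou : ∀ v : ℝ × (Fin n → ℝ) → ℝ, ContDiff ℝ 1 v →
      ∫ z, v z ∂μp = (∫ y, v (0, y) ∂μ₀) +
        ∫ z, fderiv ℝ v (z.1, z.2.1) (1, f z) ∂(μbar₀ + μbar₁))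
    (hcons : ∀ φ : ℝ × (Fin n → ℝ) → ℝ, Continuous φ →
      (∫ z, φ (z.1, z.2.2) ∂(μbar₀ + μbar₁)) + (∫ z, φ z ∂ν) =
        (∫ z, φ (z.1 + τ, z.2) ∂μh) + ∫ z, φ (z.1 + τ, z.2.1) ∂μbar₀) :
    μh Set.univ = ENNReal.ofReal τ ∧
      μ₀ Set.univ = 1 ∧
      μp Set.univ = 1 ∧
      (μbar₀ + μbar₁) Set.univ ≤ ENNReal.ofReal T ∧
      μbar₁ Set.univ ≤ ENNReal.ofReal τ ∧
      ν Set.univ ≤ ENNReal.ofReal τ := by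

  have hτ0 : (0:ℝ) ≤ τ := hτ.le
  have hT0 : (0:ℝ) ≤ T := hτ0.trans hT.le
  -- mass of μh
  have hμh : μh Set.univ = ENNReal.ofReal τ := by
    have h1 : Measure.map Prod.fst μh Set.univ = μh Set.univ := by
      rw [Measure.map_apply measurable_fst MeasurableSet.univ]; simp
    rw [hmarg] at h1
    rw [← h1]
    simp [Real.volume_Icc]
  have hμhreal : (μh Set.univ).toReal = τ := by
    rw [hμh, ENNReal.toReal_ofReal hτ0]
  -- mass of μp via constant test function
  have hliou1 := hliou (fun _ => 1) contDiff_const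
  simp only [fderiv_fun_const, Pi.zero_apply, ContinuousLinearMap.zero_apply,
    integral_const, measureReal_def, integral_zero, smul_eq_mul, mul_one, mul_zero, hprob, ENNReal.toReal_one,
    add_zero] at hliou1
  have hμp : μp Set.univ = 1 :=
    (ENNReal.toReal_eq_one_iff _).mp hliou1
  -- mass of μbar₀ + μbar₁ via test function v = fst
  have hsum_ne : (μbar₀ + μbar₁) Set.univ ≠ ⊤ := by
    simp [Measure.add_apply, ENNReal.add_ne_top, measure_ne_top]
  have hliou2 := hliou Prod.fst contDiff_fst
  simp only [fderiv_fst, ContinuousLinearMap.coe_fst', integral_const, smul_eq_mul,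
    mul_one] at hliou2
  have hμ0int : ∫ y, (0:ℝ) ∂μ₀ = 0 := integral_zero _ _
  -- the μ₀ integral in hliou2 is of the function y ↦ (0, y).1 = 0
  have hliou2' : ∫ z, z.1 ∂μp = ((μbar₀ + μbar₁) Set.univ).toReal := by
    simpa [measureReal_def] using hliou2
  have haep : ∀ᵐ z ∂μp, z ∈ Set.Icc (0:ℝ) T ×ˢ X := by
    rw [ae_iff]
    convert hμpsupp using 2
    rfl
  have hbound : ∀ᵐ z ∂μp, ‖z.1‖ ≤ T := by
    filter_upwards [haep] with z hz
    rw [Real.norm_eq_abs, abs_le]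
    exact ⟨by linarith [hz.1.1], hz.1.2⟩
  have hint : Integrable (fun z : ℝ × (Fin n → ℝ) => z.1) μp :=
    Integrable.mono' (integrable_const T) continuous_fst.aestronglyMeasurable hbound
  have hintle : ∫ z, z.1 ∂μp ≤ T := by
    calc ∫ z, z.1 ∂μp ≤ ∫ _, T ∂μp :=
          integral_mono_ae hint (integrable_const T)
            (by filter_upwards [haep] with z hz; exact hz.1.2)
      _ = T := by simp [integral_const, measureReal_def, hμp]
  have hsumle : (μbar₀ + μbar₁) Set.univ ≤ ENNReal.ofReal T := by
    refine (ENNReal.le_ofReal_iff_toReal_le hsum_ne hT0).mpr ?_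
    rw [← hliou2']; exact hintle
  -- consistency with φ = 1 gives μbar₁ + ν masses
  have hcons1 := hcons (fun _ => 1) continuous_const
  simp only [integral_const, measureReal_def, smul_eq_mul, mul_one] at hcons1
  have hadd : ((μbar₀ + μbar₁) Set.univ).toReal
      = (μbar₀ Set.univ).toReal + (μbar₁ Set.univ).toReal := by
    rw [Measure.add_apply, ENNReal.toReal_add (measure_ne_top _ _) (measure_ne_top _ _)]
  rw [hadd, hμhreal] at hcons1
  have hkey : (μbar₁ Set.univ).toReal + (ν Set.univ).toReal = τ := by linarith
  have hν : ν Set.univ ≤ ENNReal.ofReal τ := by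
    refine (ENNReal.le_ofReal_iff_toReal_le (measure_ne_top _ _) hτ0).mpr ?_
    have := ENNReal.toReal_nonneg (a := μbar₁ Set.univ); linarith
  have hμbar₁ : μbar₁ Set.univ ≤ ENNReal.ofReal τ := by
    refine (ENNReal.le_ofReal_iff_toReal_le (measure_ne_top _ _) hτ0).mpr ?_
    have := ENNReal.toReal_nonneg (a := ν Set.univ); linarith
  exact ⟨hμh, hprob, hμp, hsumle, hμbar₁, hν⟩
end

section
/- Suppose functions v ∈ C¹([0,T]×X), φ ∈ C([0,T]×X), ξ ∈ C([-τ,0]) and γ ∈ ℝ satisfy the dual feasibility conditions: ξ(t)+φ(t+τ,x) ≥ 0 on H₀; γ ≥ v(0,x) on X₀; v(t,x) ≥ p(x) on [0,T]×X; φ ≤ 0 on [0,T]×X; 𝓛_f v(t,x₀)+φ(t,x₁) ≤ φ(t+τ,x₀) on [0,T-τ]×X²; and 𝓛_f v(t,x₀)+φ(t,x₁) ≤ 0 on [T-τ,T]×X². Then for any tuple of measures (μ_h, μ₀, μ_p, μ̄₀, μ̄₁, ν) feasible for the measure LP (History-Validity, Liouville, Consistency constraints with the indicated supports), one has ⟨p,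 μ_p⟩ ≤ γ + ∫_{-τ}^0 ξ(t) dt. -/
open MeasureTheory Set

private lemma integrable_of_null_compl {α : Type*} [MeasurableSpace α] [TopologicalSpace α]
    [OpensMeasurableSpace α] [T2Space α]
    {μ : Measure α} [IsFiniteMeasure μ] {K : Set α} (hK : IsCompact K)
    (hμ : μ Kᶜ = 0) {g : α → ℝ} (hg : Continuous g) : Integrable g μ := by
  have h1 : IntegrableOn g K μ := hg.continuousOn.integrableOn_compact hK
  have h2 : μ.restrict K = μ :=
    Measure.restrict_eq_self_of_ae_mem (by
      rw [ae_iff]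
      exact hμ)
  rwa [IntegrableOn, h2] at h1

private lemma ae_mem_of_null_compl {α : Type*} [MeasurableSpace α]
    {μ : Measure α} {K : Set α} (hμ : μ Kᶜ = 0) : ∀ᵐ x ∂μ, x ∈ K := by
  rw [ae_iff]; exact hμ

theorem weak_duality_peak_estimation {n : ℕ}
    (τ T : ℝ) (hτ : 0 < τ) (hT : τ < T)
    (X : Set (Fin n → ℝ)) (hX : IsCompact X)
    (X₀ : Set (Fin n → ℝ)) (hX₀ : X₀ ⊆ X)
    (H₀ : Set (ℝ × (Fin n → ℝ))) (hH₀ : H₀ ⊆ Set.Icc (-τ) (0:ℝ) ×ˢ X)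
    (f : ℝ × (Fin n → ℝ) × (Fin n → ℝ) → (Fin n → ℝ)) (hf : Continuous f)
    (p : (Fin n → ℝ) → ℝ) (hp : Continuous p)
    -- dual variables
    (γ : ℝ) (ξ : ℝ → ℝ) (hξ : Continuous ξ)
    (v : ℝ × (Fin n → ℝ) → ℝ) (hv : ContDiff ℝ 1 v)
    (φ : ℝ × (Fin n → ℝ) → ℝ) (hφ : Continuous φ)
    -- dual feasibility
    (hd1 : ∀ z ∈ H₀, 0 ≤ ξ z.1 + φ (z.1 + τ, z.2))
    (hd2 : ∀ y ∈ X₀, v (0, y) ≤ γ)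
    (hd3 : ∀ t ∈ Set.Icc (0:ℝ) T, ∀ y ∈ X, p y ≤ v (t, y))
    (hd4 : ∀ t ∈ Set.Icc (0:ℝ) T, ∀ y ∈ X, φ (t, y) ≤ 0)
    (hd5 : ∀ t ∈ Set.Icc (0:ℝ) (T - τ), ∀ x₀ ∈ X, ∀ x₁ ∈ X,
      fderiv ℝ v (t, x₀) (1, f (t, x₀, x₁)) + φ (t, x₁) ≤ φ (t + τ, x₀))
    (hd6 : ∀ t ∈ Set.Icc (T - τ) T, ∀ x₀ ∈ X, ∀ x₁ ∈ X,
      fderiv ℝ v (t, x₀) (1, f (t, x₀, x₁)) + φ (t, x₁) ≤ 0)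
    -- primal feasible measures
    (μh : Measure (ℝ × (Fin n → ℝ))) (μ₀ : Measure (Fin n → ℝ))
    (μp ν : Measure (ℝ × (Fin n → ℝ)))
    (μbar₀ μbar₁ : Measure (ℝ × (Fin n → ℝ) × (Fin n → ℝ)))
    [IsFiniteMeasure μh] [IsFiniteMeasure μ₀] [IsFiniteMeasure μp]
    [IsFiniteMeasure ν] [IsFiniteMeasure μbar₀] [IsFiniteMeasure μbar₁]
    (hμhsupp : μh H₀ᶜ = 0)
    (hμ₀supp : μ₀ X₀ᶜ = 0)
    (hμpsupp : μp ((Set.Icc (0:ℝ) T ×ˢ X)ᶜ) = 0)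
    (hνsupp : ν ((Set.Icc (0:ℝ) T ×ˢ X)ᶜ) = 0)
    (hμbar₀supp : μbar₀ ((Set.Icc (0:ℝ) (T - τ) ×ˢ (X ×ˢ X))ᶜ) = 0)
    (hμbar₁supp : μbar₁ ((Set.Icc (T - τ) T ×ˢ (X ×ˢ X))ᶜ) = 0)
    (hprob : μ₀ Set.univ = 1)
    (hmarg : Measure.map Prod.fst μh = volume.restrict (Set.Icc (-τ) (0:ℝ)))
    (hliou : ∀ w : ℝ × (Fin n → ℝ) → ℝ, ContDiff ℝ 1 w →
      ∫ z, w z ∂μp = (∫ y, w (0, y) ∂μ₀) +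
        ∫ z, fderiv ℝ w (z.1, z.2.1) (1, f z) ∂(μbar₀ + μbar₁))
    (hcons : ∀ ψ : ℝ × (Fin n → ℝ) → ℝ, Continuous ψ →
      (∫ z, ψ (z.1, z.2.2) ∂(μbar₀ + μbar₁)) + (∫ z, ψ z ∂ν) =
        (∫ z, ψ (z.1 + τ, z.2) ∂μh) + ∫ z, ψ (z.1 + τ, z.2.1) ∂μbar₀) :
    ∫ z, p z.2 ∂μp ≤ γ + ∫ t in (-τ)..(0:ℝ), ξ t := by
  have hvc : Continuous v := hv.continuous
  -- compactness
  have hK1 : IsCompact (Icc (-τ) (0:ℝ) ×ˢ X) := isCompact_Icc.prod hX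
  have hK2 : IsCompact (Icc (0:ℝ) T ×ˢ X) := isCompact_Icc.prod hX
  have hK3 : IsCompact (Icc (0:ℝ) (T - τ) ×ˢ (X ×ˢ X)) := isCompact_Icc.prod (hX.prod hX)
  have hK4 : IsCompact (Icc (T - τ) T ×ˢ (X ×ˢ X)) := isCompact_Icc.prod (hX.prod hX)
  have hμhK : μh ((Icc (-τ) (0:ℝ) ×ˢ X)ᶜ) = 0 :=
    measure_mono_null (compl_subset_compl.2 hH₀) hμhsupp
  have hμ₀X : μ₀ Xᶜ = 0 := measure_mono_null (compl_subset_compl.2 hX₀) hμ₀supp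
  -- continuity of the generator applied to v
  have hLv : Continuous (fun z : ℝ × (Fin n → ℝ) × (Fin n → ℝ) =>
      fderiv ℝ v (z.1, z.2.1) (1, f z)) := by
    have h1 : Continuous (fderiv ℝ v) := hv.continuous_fderiv one_ne_zero
    exact (h1.comp (continuous_fst.prodMk (continuous_fst.comp continuous_snd))).clm_apply
      ((continuous_const.prodMk hf))
  -- Step 1 : ∫ p dμp ≤ ∫ v dμp
  have step1 : ∫ z, p z.2 ∂μp ≤ ∫ z, v z ∂μp := by
    refine integral_mono_ae
      (integrable_of_null_compl hK2 hμpsupp (hp.comp continuous_snd))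
      (integrable_of_null_compl hK2 hμpsupp hvc) ?_
    filter_upwards [ae_mem_of_null_compl hμpsupp] with z hz
    simpa using hd3 z.1 hz.1 z.2 hz.2
  -- Step 2 : Liouville for v
  have hL := hliou v hv
  -- Step 3 : initial term
  have step3 : ∫ y, v (0, y) ∂μ₀ ≤ γ := by
    have h := integral_mono_ae
      (integrable_of_null_compl hX hμ₀X (hvc.comp (continuous_const.prodMk continuous_id)))
      (integrable_const γ)
      (by filter_upwards [ae_mem_of_null_compl hμ₀supp] with y hy using hd2 y hy)
    simpa [integral_const, Measure.real, hprob] using h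
  -- Step 4 : generator bounds on μbar₀ and μbar₁
  have hφ0 : Continuous (fun z : ℝ × (Fin n → ℝ) × (Fin n → ℝ) => φ (z.1 + τ, z.2.1)) :=
    hφ.comp ((continuous_fst.add continuous_const).prodMk (continuous_fst.comp continuous_snd))
  have hφ1 : Continuous (fun z : ℝ × (Fin n → ℝ) × (Fin n → ℝ) => φ (z.1, z.2.2)) :=
    hφ.comp (continuous_fst.prodMk (continuous_snd.comp continuous_snd))
  have step4a : ∫ z, fderiv ℝ v (z.1, z.2.1) (1, f z) ∂μbar₀ ≤
      ∫ z, (φ (z.1 + τ, z.2.1) - φ (z.1, z.2.2)) ∂μbar₀ := by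
    refine integral_mono_ae
      (integrable_of_null_compl hK3 hμbar₀supp hLv)
      (integrable_of_null_compl hK3 hμbar₀supp (hφ0.sub hφ1)) ?_
    filter_upwards [ae_mem_of_null_compl hμbar₀supp] with z hz
    have := hd5 z.1 hz.1 z.2.1 hz.2.1 z.2.2 hz.2.2
    linarith [this]
  have step4b : ∫ z, fderiv ℝ v (z.1, z.2.1) (1, f z) ∂μbar₁ ≤
      ∫ z, (-φ (z.1, z.2.2)) ∂μbar₁ := by
    refine integral_mono_ae
      (integrable_of_null_compl hK4 hμbar₁supp hLv)
      (integrable_of_null_compl hK4 hμbar₁supp hφ1.neg) ?_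
    filter_upwards [ae_mem_of_null_compl hμbar₁supp] with z hz
    have := hd6 z.1 hz.1 z.2.1 hz.2.1 z.2.2 hz.2.2
    linarith [this]
  -- split integrals over the sum measure
  have hint0a : Integrable (fun z => φ (z.1 + τ, z.2.1)) μbar₀ :=
    integrable_of_null_compl hK3 hμbar₀supp hφ0
  have hint0b : Integrable (fun z => φ (z.1, z.2.2)) μbar₀ :=
    integrable_of_null_compl hK3 hμbar₀supp hφ1
  have hint1b : Integrable (fun z => φ (z.1, z.2.2)) μbar₁ :=
    integrable_of_null_compl hK4 hμbar₁supp hφ1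
  have hsplitL : ∫ z, fderiv ℝ v (z.1, z.2.1) (1, f z) ∂(μbar₀ + μbar₁) =
      (∫ z, fderiv ℝ v (z.1, z.2.1) (1, f z) ∂μbar₀) +
      ∫ z, fderiv ℝ v (z.1, z.2.1) (1, f z) ∂μbar₁ :=
    integral_add_measure (integrable_of_null_compl hK3 hμbar₀supp hLv)
      (integrable_of_null_compl hK4 hμbar₁supp hLv)
  have hsplitφ : ∫ z, φ (z.1, z.2.2) ∂(μbar₀ + μbar₁) =
      (∫ z, φ (z.1, z.2.2) ∂μbar₀) + ∫ z, φ (z.1, z.2.2) ∂μbar₁ :=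
    integral_add_measure hint0b hint1b
  have hsub : ∫ z, (φ (z.1 + τ, z.2.1) - φ (z.1, z.2.2)) ∂μbar₀ =
      (∫ z, φ (z.1 + τ, z.2.1) ∂μbar₀) - ∫ z, φ (z.1, z.2.2) ∂μbar₀ :=
    integral_sub hint0a hint0b
  have hneg : ∫ z, (-φ (z.1, z.2.2)) ∂μbar₁ = -∫ z, φ (z.1, z.2.2) ∂μbar₁ :=
    integral_neg _
  -- Step 7 : consistency with ψ = φ
  have hcφ := hcons φ hφ
  -- Step 8 : ∫ φ dν ≤ 0
  have step8 : ∫ z, φ z ∂ν ≤ 0 := by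
    refine integral_nonpos_of_ae ?_
    filter_upwards [ae_mem_of_null_compl hνsupp] with z hz
    simpa using hd4 z.1 hz.1 z.2 hz.2
  -- Step 9 : history bound
  have step9 : -∫ z, ξ z.1 ∂μh ≤ ∫ z, φ (z.1 + τ, z.2) ∂μh := by
    have hIξ : Integrable (fun z : ℝ × (Fin n → ℝ) => -ξ z.1) μh :=
      integrable_of_null_compl hK1 hμhK (by fun_prop)
    have hIφh : Integrable (fun z : ℝ × (Fin n → ℝ) => φ (z.1 + τ, z.2)) μh :=
      integrable_of_null_compl hK1 hμhK (by fun_prop)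
    have h := integral_mono_ae hIξ hIφh
      (by
        filter_upwards [ae_mem_of_null_compl hμhsupp] with z hz
        have := hd1 z hz
        linarith)
    simpa [integral_neg] using h
  -- Step 10 : ∫ ξ(z.1) dμh = ∫_{-τ}^0 ξ
  have step10 : ∫ z, ξ z.1 ∂μh = ∫ t in (-τ)..(0:ℝ), ξ t := by
    have h1 : ∫ z, ξ z.1 ∂μh = ∫ t, ξ t ∂(Measure.map Prod.fst μh) :=
      (integral_map measurable_fst.aemeasurable hξ.aestronglyMeasurable).symm
    rw [h1, hmarg, intervalIntegral.integral_of_le (by linarith : (-τ:ℝ) ≤ 0),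
      ← integral_Icc_eq_integral_Ioc]
  -- Assemble
  have key : (∫ z, φ (z.1 + τ, z.2.1) ∂μbar₀) - ∫ z, φ (z.1, z.2.2) ∂(μbar₀ + μbar₁) =
      (∫ z, φ z ∂ν) - ∫ z, φ (z.1 + τ, z.2) ∂μh := by linarith [hcφ]
  calc ∫ z, p z.2 ∂μp ≤ ∫ z, v z ∂μp := step1
    _ = (∫ y, v (0, y) ∂μ₀) + ∫ z, fderiv ℝ v (z.1, z.2.1) (1, f z) ∂(μbar₀ + μbar₁) := hL
    _ ≤ γ + ((∫ z, φ z ∂ν) - ∫ z, φ (z.1 + τ, z.2) ∂μh) := by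
        rw [hsplitL]
        have : (∫ z, fderiv ℝ v (z.1, z.2.1) (1, f z) ∂μbar₀) +
            ∫ z, fderiv ℝ v (z.1, z.2.1) (1, f z) ∂μbar₁ ≤
            (∫ z, φ (z.1 + τ, z.2.1) ∂μbar₀) - ∫ z, φ (z.1, z.2.2) ∂(μbar₀ + μbar₁) := by
          rw [hsplitφ]
          linarith [step4a, step4b, hsub, hneg]
        linarith [step3, key]
    _ ≤ γ + ∫ t in (-τ)..(0:ℝ), ξ t := by
        rw [← step10]
        linarith [step8, step9]
end

section
/- Let x : [-τ, T] → X be a solution of the DDE ẋ(t) = f(t, x(t), x(t-τ)) on [0,T] with piecewise-continuous initial history x_h ∈ 𝓗, where X is compact, 0 < τ < T, f is continuous, and the graph of x_h lies in H₀. Then for every stopping time t* ∈ [0,T] there exists a tuple of nonnegative Borel measures (μ_h, μ₀, μ_p, μ̄₀, μ̄₁, ν) with the supports prescribed in the measure LP that satisfies the History-Validity, Liouville, and Consistency constraints, and for which ⟨p, μ_p⟩ = p(x(t*)). Consequently the optimal value of the measure LP is at least the supremum of p(x(t* | x_h)) over all t* ∈ [0,T] and x_h ∈ 𝓗. -/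
open MeasureTheory Set

/-- If `g` is an injective measurable map on a standard Borel space whose values on a
measurable set `s` lie in `A`, then the pushforward of the restricted measure gives
zero mass to `Aᶜ`. -/
lemma aux_map_restrict_compl_null {β : Type*} [MeasurableSpace β]
    [MeasurableSpace.CountablySeparated β]
    {g : ℝ → β} (hg : Measurable g) (hinj : Function.Injective g)
    {s : Set ℝ} (_hs : MeasurableSet s) {A : Set β} (hA : ∀ t ∈ s, g t ∈ A) :
    (Measure.map g (volume.restrict s)) Aᶜ = 0 := by
  have he : MeasurableEmbedding g := hg.measurableEmbedding hinj
  have himg : MeasurableSet (g '' s) := he.measurableSet_image.2 _hs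
  refine measure_mono_null (t := (g '' s)ᶜ) (compl_subset_compl.2 (image_subset_iff.2 hA)) ?_
  rw [Measure.map_apply hg himg.compl, Measure.restrict_apply (hg himg.compl)]
  have h0 : g ⁻¹' (g '' s)ᶜ ∩ s = ∅ := by
    ext t
    simp only [mem_inter_iff, mem_preimage, mem_compl_iff, mem_empty_iff_false, iff_false,
      not_and]
    exact fun h ht => (h (mem_image_of_mem g ht)).elim
  rw [h0]; exact measure_empty

/-- Bounded measurable functions are integrable on finite-measure sets. -/
lemma aux_integrableOn_of_bounded {u : ℝ → ℝ} (hu : Measurable u) {s : Set ℝ}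
    (hs : MeasurableSet s) (hfin : volume s < ⊤) {C : ℝ} (hC : ∀ t ∈ s, |u t| ≤ C) :
    IntegrableOn u s := by
  haveI : IsFiniteMeasure (volume.restrict s) :=
    ⟨by rwa [Measure.restrict_apply_univ]⟩
  refine Integrable.mono' (g := fun _ => C) (integrable_const _)
    hu.aestronglyMeasurable.restrict ?_
  exact (ae_restrict_iff' hs).2 (Filter.Eventually.of_forall hC)

/-- Theorem 1 of the paper: every DDE trajectory with admissible history, together
with a stopping time, induces a measure-valued solution feasible for the measure LP
whose objective equals the trajectory value of `p`; hence the LP upper-bounds the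
peak estimation problem. -/
theorem measure_lp_upper_bounds_peak {n : ℕ}
    (τ T : ℝ) (hτ : 0 < τ) (hT : τ < T)
    (X : Set (Fin n → ℝ)) (hX : IsCompact X)
    (H₀ : Set (ℝ × (Fin n → ℝ))) (hH₀ : H₀ ⊆ Set.Icc (-τ) (0:ℝ) ×ˢ X)
    (f : ℝ × (Fin n → ℝ) × (Fin n → ℝ) → (Fin n → ℝ)) (hf : Continuous f)
    (p : (Fin n → ℝ) → ℝ) (hp : Continuous p)
    (x : ℝ → (Fin n → ℝ)) (hxmeas : Measurable x)
    (hxstate : ∀ t ∈ Set.Icc (-τ) T, x t ∈ X)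
    (hhist : ∀ t ∈ Set.Icc (-τ) (0:ℝ), (t, x t) ∈ H₀)
    (hdyn : ∀ t ∈ Set.Icc (0:ℝ) T, HasDerivAt x (f (t, x t, x (t - τ))) t)
    (tstar : ℝ) (htstar : tstar ∈ Set.Icc (0:ℝ) T) :
    ∃ (μh : Measure (ℝ × (Fin n → ℝ))) (μ₀ : Measure (Fin n → ℝ))
      (μp ν : Measure (ℝ × (Fin n → ℝ)))
      (μbar₀ μbar₁ : Measure (ℝ × (Fin n → ℝ) × (Fin n → ℝ))),
      -- support constraints
      μh H₀ᶜ = 0 ∧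
      μ₀ {y | (0, y) ∈ H₀}ᶜ = 0 ∧
      μp ((Set.Icc (0:ℝ) T ×ˢ X)ᶜ) = 0 ∧
      ν ((Set.Icc (0:ℝ) T ×ˢ X)ᶜ) = 0 ∧
      μbar₀ ((Set.Icc (0:ℝ) (T - τ) ×ˢ (X ×ˢ X))ᶜ) = 0 ∧
      μbar₁ ((Set.Icc (T - τ) T ×ˢ (X ×ˢ X))ᶜ) = 0 ∧
      -- History-Validity
      μ₀ Set.univ = 1 ∧
      Measure.map Prod.fst μh = volume.restrict (Set.Icc (-τ) (0:ℝ)) ∧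
      -- Liouville
      (∀ v : ℝ × (Fin n → ℝ) → ℝ, ContDiff ℝ 1 v →
        ∫ z, v z ∂μp = (∫ y, v (0, y) ∂μ₀) +
          ∫ z, fderiv ℝ v (z.1, z.2.1) (1, f z) ∂(μbar₀ + μbar₁)) ∧
      -- Consistency
      (∀ ψ : ℝ × (Fin n → ℝ) → ℝ, Continuous ψ →
        (∫ z, ψ (z.1, z.2.2) ∂(μbar₀ + μbar₁)) + (∫ z, ψ z ∂ν) =
          (∫ z, ψ (z.1 + τ, z.2) ∂μh) + ∫ z, ψ (z.1 + τ, z.2.1) ∂μbar₀) ∧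
      -- objective value
      ∫ z, p z.2 ∂μp = p (x tstar) := by
  obtain ⟨ht0, htT⟩ := htstar
  set a : ℝ := min tstar (T - τ) with ha
  have ha0 : 0 ≤ a := le_min ht0 (by linarith)
  have hat : a ≤ tstar := min_le_left _ _
  have haT : a ≤ T - τ := min_le_right _ _
  have hta : tstar ≤ a + τ := by
    rcases le_total tstar (T - τ) with h | h
    · rw [ha, min_eq_left h]; linarith
    · rw [ha, min_eq_right h]; linarith
  have haτT : a + τ ≤ T := by linarith
  -- the three graph maps
  set g1 : ℝ → ℝ × (Fin n → ℝ) := fun t => (t, x t) with hg1def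
  set g2 : ℝ → ℝ × (Fin n → ℝ) × (Fin n → ℝ) := fun t => (t, x t, x (t - τ)) with hg2def
  set g3 : ℝ → ℝ × (Fin n → ℝ) := fun t => (t, x (t - τ)) with hg3def
  have hxd : Measurable fun t : ℝ => x (t - τ) :=
    hxmeas.comp (measurable_id.sub measurable_const)
  have hg1 : Measurable g1 := measurable_id.prodMk hxmeas
  have hg2 : Measurable g2 := measurable_id.prodMk (hxmeas.prodMk hxd)
  have hg3 : Measurable g3 := measurable_id.prodMk hxd
  have hg1i : Function.Injective g1 := fun s t h => congrArg Prod.fst h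
  have hg2i : Function.Injective g2 := fun s t h => congrArg Prod.fst h
  have hg3i : Function.Injective g3 := fun s t h => congrArg Prod.fst h
  refine ⟨Measure.map g1 (volume.restrict (Icc (-τ) 0)), Measure.dirac (x 0),
    Measure.dirac (tstar, x tstar), Measure.map g3 (volume.restrict (Icc tstar (a + τ))),
    Measure.map g2 (volume.restrict (Icc 0 a)), Measure.map g2 (volume.restrict (Icc a tstar)),
    ?_, ?_, ?_, ?_, ?_, ?_, ?_, ?_, ?_, ?_, ?_⟩
  · -- μh supported on H₀
    exact aux_map_restrict_compl_null hg1 hg1i measurableSet_Icc fun t ht => hhist t ht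
  · -- μ₀ support
    rw [Measure.dirac_apply]
    have hmem : x 0 ∈ {y | ((0:ℝ), y) ∈ H₀} := hhist 0 ⟨by linarith, le_refl 0⟩
    simp [Set.indicator_apply, hmem]
  · -- μp support
    rw [Measure.dirac_apply]
    have hmem : (tstar, x tstar) ∈ Icc (0:ℝ) T ×ˢ X :=
      ⟨⟨ht0, htT⟩, hxstate tstar ⟨by linarith, htT⟩⟩
    simp [Set.indicator_apply, hmem]
  · -- ν support
    refine aux_map_restrict_compl_null hg3 hg3i measurableSet_Icc fun t ht => ?_
    exact ⟨⟨by linarith [ht.1], by linarith [ht.2]⟩,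
      hxstate _ ⟨by linarith [ht.1], by linarith [ht.2]⟩⟩
  · -- μbar₀ support
    refine aux_map_restrict_compl_null hg2 hg2i measurableSet_Icc fun t ht => ?_
    exact ⟨⟨ht.1, by linarith [ht.2]⟩, hxstate _ ⟨by linarith [ht.1], by linarith [ht.2]⟩,
      hxstate _ ⟨by linarith [ht.1], by linarith [ht.2]⟩⟩
  · -- μbar₁ support
    rcases le_or_gt tstar (T - τ) with h | h
    · have haa : a = tstar := by rw [ha, min_eq_left h]
      have : volume.restrict (Icc a tstar) = 0 := by
        rw [Measure.restrict_eq_zero, haa, Real.volume_Icc]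
        simp
      rw [this, Measure.map_zero]; rfl
    · have haa : a = T - τ := by rw [ha, min_eq_right h.le]
      refine aux_map_restrict_compl_null hg2 hg2i measurableSet_Icc fun t ht => ?_
      rw [haa] at ht
      exact ⟨⟨ht.1, by linarith [ht.2]⟩, hxstate _ ⟨by linarith [ht.1], by linarith [ht.2]⟩,
        hxstate _ ⟨by linarith [ht.1], by linarith [ht.2]⟩⟩
  · -- μ₀ is a probability measure
    simp
  · -- history validity
    rw [Measure.map_map measurable_fst hg1]
    have : Prod.fst ∘ g1 = id := rfl
    rw [this, Measure.map_id]
  · -- Liouville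
    intro v hv
    have hvdiff : Differentiable ℝ v := hv.differentiable one_ne_zero
    have hvc : Continuous (fderiv ℝ v) := hv.continuous_fderiv one_ne_zero
    set F : ℝ × (Fin n → ℝ) × (Fin n → ℝ) → ℝ :=
      fun z => fderiv ℝ v (z.1, z.2.1) (1, f z) with hFdef
    have hFc : Continuous F := by
      have h1 : Continuous fun z : ℝ × (Fin n → ℝ) × (Fin n → ℝ) =>
          fderiv ℝ v (z.1, z.2.1) :=
        hvc.comp (continuous_fst.prodMk continuous_snd.fst)
      exact h1.clm_apply (continuous_const.prodMk hf)
    obtain ⟨C1, hC1⟩ := (isCompact_Icc.prod hX).exists_bound_of_continuousOn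
      (hvc.continuousOn (s := Icc (-τ) T ×ˢ X))
    obtain ⟨C2, hC2⟩ := (isCompact_Icc.prod (hX.prod hX)).exists_bound_of_continuousOn
      (hf.continuousOn (s := Icc (-τ) T ×ˢ (X ×ˢ X)))
    have hGbound : ∀ t ∈ Icc (0:ℝ) T, |F (g2 t)| ≤ C1 * max 1 C2 := by
      intro t ht
      have htm : t ∈ Icc (-τ) T := ⟨by linarith [ht.1], ht.2⟩
      have hx1 : ((t, x t) : ℝ × (Fin n → ℝ)) ∈ Icc (-τ) T ×ˢ X := ⟨htm, hxstate t htm⟩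
      have hx2 : g2 t ∈ Icc (-τ) T ×ˢ (X ×ˢ X) :=
        ⟨htm, hxstate t htm, hxstate _ ⟨by linarith [ht.1], by linarith [ht.2]⟩⟩
      rw [← Real.norm_eq_abs]
      calc ‖F (g2 t)‖ = ‖fderiv ℝ v (t, x t) (1, f (g2 t))‖ := rfl
        _ ≤ ‖fderiv ℝ v (t, x t)‖ * ‖((1:ℝ), f (g2 t))‖ :=
            ContinuousLinearMap.le_opNorm _ _
        _ ≤ C1 * max 1 C2 := by
            refine mul_le_mul (hC1 _ hx1) ?_ (norm_nonneg _)
              ((norm_nonneg _).trans (hC1 _ hx1))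
            rw [Prod.norm_def]
            simp only [norm_one]
            exact max_le_max le_rfl (hC2 _ hx2)
    have hIcc0T : IntegrableOn (fun t => F (g2 t)) (Icc (0:ℝ) T) :=
      aux_integrableOn_of_bounded (hFc.measurable.comp hg2) measurableSet_Icc
        measure_Icc_lt_top hGbound
    have hderiv : ∀ t ∈ Icc (0:ℝ) tstar, HasDerivAt (fun s => v (g1 s)) (F (g2 t)) t := by
      intro t ht
      have ht' : t ∈ Icc (0:ℝ) T := ⟨ht.1, ht.2.trans htT⟩
      have h1 : HasDerivAt g1 ((1 : ℝ), f (g2 t)) t := (hasDerivAt_id t).prodMk (hdyn t ht')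
      exact ((hvdiff (g1 t)).hasFDerivAt).comp_hasDerivAt t h1
    have hsub : ∀ c d : ℝ, (0:ℝ) ≤ c → d ≤ T → c ≤ d →
        IntervalIntegrable (fun t => F (g2 t)) volume c d := by
      intro c d hc hd hcd
      refine (hIcc0T.mono_set ?_).intervalIntegrable
      rw [uIcc_of_le hcd]
      exact Icc_subset_Icc hc hd
    have hFTC : ∫ t in (0:ℝ)..tstar, F (g2 t) = v (g1 tstar) - v (g1 0) := by
      refine intervalIntegral.integral_eq_sub_of_hasDerivAt
        (fun t ht => hderiv t (by rwa [uIcc_of_le ht0] at ht)) ?_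
      exact hsub 0 tstar le_rfl htT ht0
    have hint : ∀ s : Set ℝ, s ⊆ Icc (0:ℝ) T →
        Integrable F (Measure.map g2 (volume.restrict s)) := by
      intro s hssub
      exact (integrable_map_measure hFc.aestronglyMeasurable hg2.aemeasurable).2
        (hIcc0T.mono_set hssub)
    rw [integral_add_measure (hint _ (Icc_subset_Icc le_rfl (by linarith)))
        (hint _ (Icc_subset_Icc ha0 htT)),
      integral_map hg2.aemeasurable hFc.aestronglyMeasurable,
      integral_map hg2.aemeasurable hFc.aestronglyMeasurable,
      integral_dirac, integral_dirac]
    have e1 : ∫ t in Icc (0:ℝ) a, F (g2 t) = ∫ t in (0:ℝ)..a, F (g2 t) := by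
      rw [integral_Icc_eq_integral_Ioc, intervalIntegral.integral_of_le ha0]
    have e2 : ∫ t in Icc a tstar, F (g2 t) = ∫ t in a..tstar, F (g2 t) := by
      rw [integral_Icc_eq_integral_Ioc, intervalIntegral.integral_of_le hat]
    rw [e1, e2, intervalIntegral.integral_add_adjacent_intervals
      (hsub 0 a le_rfl (by linarith) ha0) (hsub a tstar ha0 htT hat), hFTC]
    show v (tstar, x tstar) = v (0, x 0) + (v (g1 tstar) - v (g1 0))
    simp [hg1def]
  · -- Consistency
    intro ψ hψ
    set P : ℝ → ℝ := fun t => ψ (g3 t) with hPdef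
    have hPm : Measurable P := hψ.measurable.comp hg3
    obtain ⟨Cψ, hCψ⟩ := (isCompact_Icc.prod hX).exists_bound_of_continuousOn
      (hψ.continuousOn (s := Icc (0:ℝ) T ×ˢ X))
    have hPbound : ∀ t ∈ Icc (0:ℝ) T, |P t| ≤ Cψ := by
      intro t ht
      have : g3 t ∈ Icc (0:ℝ) T ×ˢ X :=
        ⟨ht, hxstate _ ⟨by linarith [ht.1], by linarith [ht.2]⟩⟩
      rw [← Real.norm_eq_abs]
      exact hCψ _ this
    have hPInt : IntegrableOn P (Icc (0:ℝ) T) :=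
      aux_integrableOn_of_bounded hPm measurableSet_Icc measure_Icc_lt_top hPbound
    have hII : ∀ c d : ℝ, (0:ℝ) ≤ c → d ≤ T → c ≤ d → IntervalIntegrable P volume c d := by
      intro c d hc hd hcd
      refine (hPInt.mono_set ?_).intervalIntegrable
      rw [uIcc_of_le hcd]
      exact Icc_subset_Icc hc hd
    -- continuous integrands on the product spaces
    have hF1c : Continuous fun z : ℝ × (Fin n → ℝ) × (Fin n → ℝ) => ψ (z.1, z.2.2) :=
      hψ.comp (continuous_fst.prodMk continuous_snd.snd)
    have hF2c : Continuous fun z : ℝ × (Fin n → ℝ) => ψ (z.1 + τ, z.2) :=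
      hψ.comp ((continuous_fst.add continuous_const).prodMk continuous_snd)
    have hF3c : Continuous fun z : ℝ × (Fin n → ℝ) × (Fin n → ℝ) => ψ (z.1 + τ, z.2.1) :=
      hψ.comp ((continuous_fst.add continuous_const).prodMk continuous_snd.fst)
    have hQm : Measurable fun t : ℝ => ψ (t + τ, x t) :=
      hψ.measurable.comp ((measurable_id.add_const τ).prodMk hxmeas)
    have hint : ∀ s : Set ℝ, s ⊆ Icc (0:ℝ) T →
        Integrable (fun z : ℝ × (Fin n → ℝ) × (Fin n → ℝ) => ψ (z.1, z.2.2))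
          (Measure.map g2 (volume.restrict s)) := by
      intro s hssub
      exact (integrable_map_measure hF1c.aestronglyMeasurable hg2.aemeasurable).2
        (hPInt.mono_set hssub)
    rw [integral_add_measure (hint _ (Icc_subset_Icc le_rfl (by linarith)))
        (hint _ (Icc_subset_Icc ha0 htT)),
      integral_map hg2.aemeasurable hF1c.aestronglyMeasurable,
      integral_map hg2.aemeasurable hF1c.aestronglyMeasurable,
      integral_map hg3.aemeasurable hψ.aestronglyMeasurable,
      integral_map hg1.aemeasurable hF2c.aestronglyMeasurable,
      integral_map hg2.aemeasurable hF3c.aestronglyMeasurable]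
    -- identify all composite integrands with P (possibly shifted)
    have hcomp2 : ∀ t : ℝ, ψ ((g2 t).1, (g2 t).2.2) = P t := fun t => rfl
    have hQP : ∀ t : ℝ, ψ (t + τ, x t) = P (t + τ) := by
      intro t
      simp only [hPdef, hg3def, add_sub_cancel_right]
    -- convert to interval integrals
    have e1 : ∫ t in Icc (0:ℝ) a, ψ ((g2 t).1, (g2 t).2.2) = ∫ t in (0:ℝ)..a, P t := by
      rw [integral_Icc_eq_integral_Ioc, intervalIntegral.integral_of_le ha0]
    have e2 : ∫ t in Icc a tstar, ψ ((g2 t).1, (g2 t).2.2) = ∫ t in a..tstar, P t := by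
      rw [integral_Icc_eq_integral_Ioc, intervalIntegral.integral_of_le hat]
    have e3 : ∫ t in Icc tstar (a + τ), ψ (g3 t) = ∫ t in tstar..(a + τ), P t := by
      rw [integral_Icc_eq_integral_Ioc, intervalIntegral.integral_of_le hta]
    have e4 : ∫ t in Icc (-τ) (0:ℝ), ψ ((g1 t).1 + τ, (g1 t).2) = ∫ t in (0:ℝ)..τ, P t := by
      rw [integral_Icc_eq_integral_Ioc, ← intervalIntegral.integral_of_le (by linarith : -τ ≤ (0:ℝ))]
      have : (fun t => ψ ((g1 t).1 + τ, (g1 t).2)) = fun t => P (t + τ) := by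
        funext t; exact hQP t
      rw [this, intervalIntegral.integral_comp_add_right P τ]
      norm_num
    have e5 : ∫ t in Icc (0:ℝ) a, ψ ((g2 t).1 + τ, (g2 t).2.1) = ∫ t in τ..(a + τ), P t := by
      rw [integral_Icc_eq_integral_Ioc, ← intervalIntegral.integral_of_le ha0]
      have : (fun t => ψ ((g2 t).1 + τ, (g2 t).2.1)) = fun t => P (t + τ) := by
        funext t; exact hQP t
      rw [this, intervalIntegral.integral_comp_add_right P τ]
      norm_num
    simp only [hcomp2] at e1 e2 ⊢
    rw [e1, e2, e3, e4, e5,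
      intervalIntegral.integral_add_adjacent_intervals
        (hII 0 a le_rfl (by linarith) ha0) (hII a tstar ha0 htT hat),
      intervalIntegral.integral_add_adjacent_intervals
        (hII 0 tstar le_rfl htT ht0) (hII tstar (a + τ) ht0 haτT hta),
      intervalIntegral.integral_add_adjacent_intervals
        (hII 0 τ le_rfl hT.le hτ.le) (hII τ (a + τ) hτ.le haτT (by linarith))]
  · -- objective
    exact integral_dirac (fun z : ℝ × (Fin n → ℝ) => p z.2) (tstar, x tstar)
end

section
/- Let v ∈ C¹([0,T]×X), φ ∈ C([0,T]×X) and define V(t, z, w(·)) = v(t,z) + ∫_t^{min(t+τ,T)} φ(s, w(s-τ-t)) ds along a controlled DDE trajectory. If (v, φ) satisfy the dual OCP constraints: J_T(x) - v(T,x) ≥ 0 on X_T; 𝓛_f v + J(t,x₀,u) - φ(t,x₁) + φ(t+τ,x₀) ≥ 0 on [0,T-τ]×X²×U; and 𝓛_f v + J(t,x₀,u) - φ(t,x₁) ≥ 0 on [T-τ,T]×X²×U; then V is a subvalue functional: V(t, z, w) ≤ V*(t, z, w) for all t ∈ [0,T], z ∈ X, w ∈ PC([-τ,0],X). -/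
open MeasureTheory Set

/-- FTC-type inequality: if `g` is differentiable on `[a, b]` with derivative bounded
below by `-Jf` pointwise, and `Jf` is interval integrable, then
`g a ≤ g b + ∫ t in a..b, Jf t`. -/
lemma aux_ftc_ineq {g g' Jf : ℝ → ℝ} {a b : ℝ} (hab : a ≤ b)
    (hg : ∀ t ∈ Set.Icc a b, HasDerivAt g (g' t) t)
    (hJ : IntervalIntegrable Jf volume a b)
    (hle : ∀ t ∈ Set.Icc a b, -Jf t ≤ g' t) :
    g a ≤ g b + ∫ t in a..b, Jf t := by
  have hcont : ContinuousOn g (Icc a b) := fun t ht =>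
    ((hg t ht).continuousAt).continuousWithinAt
  have hint : IntegrableOn (fun t => -Jf t) (Icc a b) := by
    rw [integrableOn_Icc_iff_integrableOn_Ioc]
    exact (hJ.neg).1
  have h := intervalIntegral.integral_le_sub_of_hasDeriv_right_of_le hab hcont
    (fun x hx => ((hg x ⟨hx.1.le, hx.2.le⟩).hasDerivWithinAt))
    hint (fun x hx => hle x ⟨hx.1.le, hx.2.le⟩)
  rw [intervalIntegral.integral_neg] at h
  linarith

/-- Theorem 6 of the paper: the functional recovered from a dual-feasible pair
(v, φ) of the DDE OCP dual program is a subvalue functional: its value at the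
initial condition lower-bounds the cost of every admissible controlled trajectory,
hence the optimal value functional V*. -/
theorem recovered_functional_is_subvalue {n m : ℕ}
    (τ T t₀ : ℝ) (hτ : 0 < τ) (hτT : τ < T) (ht₀ : t₀ ∈ Set.Icc (0:ℝ) T)
    (X XT : Set (Fin n → ℝ)) (hXTX : XT ⊆ X) (hX : IsCompact X)
    (U : Set (Fin m → ℝ)) (hU : IsCompact U)
    (f : ℝ → (Fin n → ℝ) → (Fin n → ℝ) → (Fin m → ℝ) → (Fin n → ℝ))
    (hf : Continuous fun z : ℝ × (Fin n → ℝ) × (Fin n → ℝ) × (Fin m → ℝ) =>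
      f z.1 z.2.1 z.2.2.1 z.2.2.2)
    (J : ℝ → (Fin n → ℝ) → (Fin m → ℝ) → ℝ)
    (hJ : Continuous fun z : ℝ × (Fin n → ℝ) × (Fin m → ℝ) => J z.1 z.2.1 z.2.2)
    (JT : (Fin n → ℝ) → ℝ) (hJT : Continuous JT)
    (v : ℝ × (Fin n → ℝ) → ℝ) (hv : ContDiff ℝ 1 v)
    (φ : ℝ × (Fin n → ℝ) → ℝ) (hφ : Continuous φ)
    -- dual OCP constraints
    (hterm : ∀ y ∈ XT, 0 ≤ JT y - v (T, y))
    (hlie0 : ∀ t ∈ Set.Icc (0:ℝ) (T - τ), ∀ x₀ ∈ X, ∀ x₁ ∈ X, ∀ u ∈ U,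
      0 ≤ fderiv ℝ v (t, x₀) (1, f t x₀ x₁ u) + J t x₀ u - φ (t, x₁) + φ (t + τ, x₀))
    (hlie1 : ∀ t ∈ Set.Icc (T - τ) T, ∀ x₀ ∈ X, ∀ x₁ ∈ X, ∀ u ∈ U,
      0 ≤ fderiv ℝ v (t, x₀) (1, f t x₀ x₁ u) + J t x₀ u - φ (t, x₁))
    -- admissible controlled trajectory
    (xt : ℝ → (Fin n → ℝ)) (hxc : Continuous xt) (ut : ℝ → (Fin m → ℝ))
    (hxX : ∀ t ∈ Set.Icc (t₀ - τ) T, xt t ∈ X)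
    (hxT : xt T ∈ XT)
    (huU : ∀ t ∈ Set.Icc t₀ T, ut t ∈ U)
    (hdyn : ∀ t ∈ Set.Icc t₀ T, HasDerivAt xt (f t (xt t) (xt (t - τ)) (ut t)) t)
    (hJint : IntervalIntegrable (fun t => J t (xt t) (ut t)) volume t₀ T) :
    v (t₀, xt t₀) + (∫ s in t₀..(min (t₀ + τ) T), φ (s, xt (s - τ))) ≤
      JT (xt T) + ∫ t in t₀..T, J t (xt t) (ut t) := by
  obtain ⟨ht₀0, ht₀T⟩ := ht₀
  -- the delayed running dual cost and its primitive
  set C : ℝ → ℝ := fun s => φ (s, xt (s - τ)) with hCdef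
  have hCc : Continuous C :=
    hφ.comp (continuous_id.prodMk (hxc.comp (continuous_id.sub continuous_const)))
  set Φ : ℝ → ℝ := fun t => ∫ s in t₀..t, C s with hΦdef
  have hΦ : ∀ t, HasDerivAt Φ (C t) t := fun t =>
    intervalIntegral.integral_hasDerivAt_right (hCc.intervalIntegrable t₀ t)
      (hCc.aestronglyMeasurable.stronglyMeasurableAtFilter) hCc.continuousAt
  have hΦ0 : Φ t₀ = 0 := intervalIntegral.integral_same
  -- derivative of t ↦ v (t, xt t)
  have hD : ∀ t ∈ Set.Icc t₀ T, HasDerivAt (fun t => v (t, xt t))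
      (fderiv ℝ v (t, xt t) (1, f t (xt t) (xt (t - τ)) (ut t))) t := by
    intro t ht
    have h1 : HasDerivAt (fun t => (t, xt t)) ((1:ℝ), f t (xt t) (xt (t - τ)) (ut t)) t :=
      HasDerivAt.prodMk (hasDerivAt_id t) (hdyn t ht)
    exact ((hv.differentiable one_ne_zero (t, xt t)).hasFDerivAt).comp_hasDerivAt t h1
  have hT : v (T, xt T) ≤ JT (xt T) := by have := hterm _ hxT; linarith
  rcases le_or_gt t₀ (T - τ) with hA | hB
  · -- case t₀ ≤ T - τ
    rw [min_eq_left (by linarith : t₀ + τ ≤ T)]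
    -- first segment [t₀, T - τ]
    have hJ1 : IntervalIntegrable (fun t => J t (xt t) (ut t)) volume t₀ (T - τ) := by
      apply hJint.mono_set
      rw [uIcc_of_le hA, uIcc_of_le ht₀T]
      exact Icc_subset_Icc le_rfl (by linarith)
    have h1 : v (t₀, xt t₀) + Φ (t₀ + τ) - Φ t₀ ≤
        (v (T - τ, xt (T - τ)) + Φ (T - τ + τ) - Φ (T - τ)) +
          ∫ t in t₀..(T - τ), J t (xt t) (ut t) := by
      refine aux_ftc_ineq (g := fun t => v (t, xt t) + Φ (t + τ) - Φ t) (g' := fun t =>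
        fderiv ℝ v (t, xt t) (1, f t (xt t) (xt (t - τ)) (ut t)) + C (t + τ) - C t)
        hA ?_ hJ1 ?_
      · intro t ht
        have h2 : HasDerivAt (fun t => Φ (t + τ)) (C (t + τ)) t := by
          have := (hΦ (t + τ)).comp t ((hasDerivAt_id t).add_const τ)
          simpa [Function.comp_def] using this
        exact ((hD t ⟨ht.1, by linarith [ht.2]⟩).add h2).sub (hΦ t)
      · intro t ht
        have key := hlie0 t ⟨by linarith [ht.1], ht.2⟩ (xt t)
          (hxX t ⟨by linarith [ht.1], by linarith [ht.2]⟩) (xt (t - τ))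
          (hxX (t - τ) ⟨by linarith [ht.1], by linarith [ht.2]⟩) (ut t)
          (huU t ⟨ht.1, by linarith [ht.2]⟩)
        simp only [hCdef, add_sub_cancel_right]
        linarith
    -- second segment [T - τ, T]
    have hJ2 : IntervalIntegrable (fun t => J t (xt t) (ut t)) volume (T - τ) T := by
      apply hJint.mono_set
      rw [uIcc_of_le (by linarith : T - τ ≤ T), uIcc_of_le ht₀T]
      exact Icc_subset_Icc (by linarith) le_rfl
    have h2 : v (T - τ, xt (T - τ)) - Φ (T - τ) ≤
        (v (T, xt T) - Φ T) + ∫ t in (T - τ)..T, J t (xt t) (ut t) := by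
      refine aux_ftc_ineq (g := fun t => v (t, xt t) - Φ t) (g' := fun t =>
        fderiv ℝ v (t, xt t) (1, f t (xt t) (xt (t - τ)) (ut t)) - C t)
        (by linarith) ?_ hJ2 ?_
      · intro t ht
        exact (hD t ⟨by linarith [ht.1], ht.2⟩).sub (hΦ t)
      · intro t ht
        have key := hlie1 t ht (xt t)
          (hxX t ⟨by linarith [ht.1], ht.2⟩) (xt (t - τ))
          (hxX (t - τ) ⟨by linarith [ht.1], by linarith [ht.2]⟩) (ut t)
          (huU t ⟨by linarith [ht.1], ht.2⟩)
        simp only [hCdef]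
        linarith
    have hsum : (∫ t in t₀..(T - τ), J t (xt t) (ut t)) +
        ∫ t in (T - τ)..T, J t (xt t) (ut t) = ∫ t in t₀..T, J t (xt t) (ut t) :=
      intervalIntegral.integral_add_adjacent_intervals hJ1 hJ2
    have hTτ : T - τ + τ = T := by ring
    rw [hTτ] at h1
    have hgoal : (∫ s in t₀..(t₀ + τ), φ (s, xt (s - τ))) = Φ (t₀ + τ) := rfl
    rw [hgoal]
    linarith
  · -- case T - τ < t₀
    rw [min_eq_right (by linarith : T ≤ t₀ + τ)]
    have h2 : v (t₀, xt t₀) - Φ t₀ ≤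
        (v (T, xt T) - Φ T) + ∫ t in t₀..T, J t (xt t) (ut t) := by
      refine aux_ftc_ineq (g := fun t => v (t, xt t) - Φ t) (g' := fun t =>
        fderiv ℝ v (t, xt t) (1, f t (xt t) (xt (t - τ)) (ut t)) - C t)
        ht₀T ?_ hJint ?_
      · intro t ht
        exact (hD t ht).sub (hΦ t)
      · intro t ht
        have key := hlie1 t ⟨by linarith [ht.1], ht.2⟩ (xt t)
          (hxX t ⟨by linarith [ht.1], ht.2⟩) (xt (t - τ))
          (hxX (t - τ) ⟨by linarith [ht.1], by linarith [ht.2]⟩) (ut t)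
          (huU t ht)
        simp only [hCdef]
        linarith
    have hgoal : (∫ s in t₀..T, φ (s, xt (s - τ))) = Φ T := rfl
    rw [hgoal]
    linarith
end
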